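/- The Santaló point satisfies s(Af) = A⁻¹(s(f)) for every nonsingular affine map A = T + a with T ∈ GL(n), where s(f) is the unique point z minimizing ∫ f^z(y) dy over z in the interior of supp(f). -/

import Mathlib

open MeasureTheory Filter
noncomputable section

/-- `ℝⁿ` as a Euclidean space. -/
abbrev Euc (n : ℕ) := EuclideanSpace ℝ (Fin n)

/-- `f` is a non-degenerate, upper semicontinuous, integrable log-concave
function on `ℝⁿ` (the class `LC`): `f ≥ 0`, `f` is upper semicontinuous,
log-concave, integrable with `0 < ∫ f`, and the interior of its support is
non-empty. -/
def IsLC {n : ℕ} (f : Euc n → ℝ) : Prop :=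
  (∀ x, 0 ≤ f x) ∧ UpperSemicontinuous f ∧
  (∀ x y : Euc n, ∀ a b : ℝ, 0 ≤ a → 0 ≤ b → a + b = 1 →
      f x ^ a * f y ^ b ≤ f (a • x + b • y)) ∧
  Integrable f ∧ 0 < ∫ x, f x ∧ (interior (Function.support f)).Nonempty

/-- The polar of `f` with respect to `z`:
`f^z(y) = inf_{x ∈ supp f} e^{−⟨x−z, y−z⟩}/f(x)`. -/
def polarAt {n : ℕ} (f : Euc n → ℝ) (z y : Euc n) : ℝ :=
  ⨅ x : Function.support f,
    Real.exp (-(inner ℝ ((x : Euc n) - z) (y - z) : ℝ)) / f x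

/-- `s` is a Santaló point of `f`: a point of the interior of the support of
`f` minimizing `z ↦ ∫ f^z`. -/
def IsSantaloPoint {n : ℕ} (f : Euc n → ℝ) (s : Euc n) : Prop :=
  s ∈ interior (Function.support f) ∧
  ∀ z ∈ interior (Function.support f), ∫ y, polarAt f s y ≤ ∫ y, polarAt f z y

/-!
Write `A = T + a`. Substituting `x = A x'` in the infimum defining the polar gives
`(f ∘ A)^w (y) = f^{A w} (A w + T⁻ᵀ (y - w))`, and the affine change of variables
`y ↦ A w + T⁻ᵀ (y - w)` has Jacobian `|det T|⁻¹`. Hence `∫ (f ∘ A)^w = |det T| ∫ f^{A w}`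
for every `w`, and since `A` maps the interior of the support of `f ∘ A` onto that of `f`,
`w` minimises the left side exactly when `A w` minimises `z ↦ ∫ f^z`.
-/

theorem LinearMap.det_adjoint {𝕜 E : Type*} [RCLike 𝕜] [NormedAddCommGroup E]
    [InnerProductSpace 𝕜 E] [FiniteDimensional 𝕜 E] (f : E →ₗ[𝕜] E) :
    LinearMap.det (LinearMap.adjoint f) = star (LinearMap.det f) := by
  let b := stdOrthonormalBasis 𝕜 E
  rw [← LinearMap.det_toMatrix b.toBasis, ← LinearMap.det_toMatrix b.toBasis,
    LinearMap.toMatrix_adjoint, Matrix.det_conjTranspose]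

theorem MeasureTheory.Measure.integral_comp_linearMap {E F : Type*} [NormedAddCommGroup E]
    [NormedSpace ℝ E] [MeasurableSpace E] [BorelSpace E] [FiniteDimensional ℝ E]
    [NormedAddCommGroup F] [NormedSpace ℝ F] (μ : Measure E) [μ.IsAddHaarMeasure]
    {L : E →ₗ[ℝ] E} (hL : LinearMap.det L ≠ 0) (g : E → F) :
    ∫ y, g (L y) ∂μ = |LinearMap.det L|⁻¹ • ∫ y, g y ∂μ := by
  have hbij : Function.Bijective L :=
    (Module.End.isUnit_iff L).1 ((LinearMap.isUnit_iff_isUnit_det L).2 hL.isUnit)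
  let e : E ≃ᵐ E :=
    (LinearEquiv.ofBijective L hbij).toContinuousLinearEquiv.toHomeomorph.toMeasurableEquiv
  calc ∫ y, g (L y) ∂μ = ∫ y, g y ∂(μ.map e) := (integral_map_equiv e g).symm
    _ = |LinearMap.det L|⁻¹ • ∫ y, g y ∂μ := by
      rw [show ⇑e = ⇑L from rfl, map_linearMap_addHaar_eq_smul_addHaar μ hL,
        integral_smul_measure, ENNReal.toReal_ofReal (abs_nonneg _), abs_inv]

theorem interior_support_comp_homeomorph {X Y M : Type*} [TopologicalSpace X]
    [TopologicalSpace Y] [Zero M] (h : X ≃ₜ Y) (f : Y → M) :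
    interior (Function.support fun x => f (h x)) = h ⁻¹' interior (Function.support f) := by
  rw [h.preimage_interior]; rfl

theorem polarAt_comp_affineEquiv {n : ℕ} (f : Euc n → ℝ) (A : Euc n ≃ᵃ[ℝ] Euc n)
    (w y : Euc n) :
    polarAt (fun x => f (A x)) w y =
      polarAt f (A w) (A w + LinearMap.adjoint (A.symm.linear : Euc n →ₗ[ℝ] Euc n) (y - w)) := by
  set S : Euc n →ₗ[ℝ] Euc n := LinearMap.adjoint (A.symm.linear : Euc n →ₗ[ℝ] Euc n)
  let e : Function.support (fun x => f (A x)) ≃ Function.support f :=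
    A.toEquiv.subtypeEquiv fun _ => Iff.rfl
  unfold polarAt
  rw [← e.iInf_comp]
  refine iInf_congr fun x => ?_
  have hinner : inner ℝ (A x - A w) (S (y - w)) = inner ℝ ((x : Euc n) - w) (y - w) := by
    rw [LinearMap.adjoint_inner_right]
    congr 1
    simpa using A.symm.toAffineMap.linearMap_vsub (A x) (A w)
  change _ = Real.exp (-inner ℝ (A x - A w) _) / f (A x)
  rw [add_sub_cancel_left, hinner]

theorem integral_polarAt_comp_affineEquiv {n : ℕ} (f : Euc n → ℝ) (A : Euc n ≃ᵃ[ℝ] Euc n)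
    (w : Euc n) :
    ∫ y, polarAt (fun x => f (A x)) w y =
      |LinearMap.det (A.linear : Euc n →ₗ[ℝ] Euc n)| * ∫ y, polarAt f (A w) y := by
  set S : Euc n →ₗ[ℝ] Euc n := LinearMap.adjoint (A.symm.linear : Euc n →ₗ[ℝ] Euc n)
  have hdet : LinearMap.det S = (LinearMap.det (A.linear : Euc n →ₗ[ℝ] Euc n))⁻¹ := by
    rw [LinearMap.det_adjoint, star_trivial, AffineEquiv.linear_symm, LinearEquiv.det_coe_symm]
  have hdet_ne : LinearMap.det S ≠ 0 := by
    simpa [hdet] using (LinearEquiv.isUnit_det' A.linear).ne_zero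
  simp_rw [polarAt_comp_affineEquiv]
  rw [integral_sub_right_eq_self (fun v => polarAt f (A w) (A w + S v)) w,
    Measure.integral_comp_linearMap volume hdet_ne (fun v => polarAt f (A w) (A w + v)),
    integral_add_left_eq_self (polarAt f (A w)) (A w), hdet, abs_inv, inv_inv, smul_eq_mul]

theorem isSantaloPoint_comp_affineEquiv_iff {n : ℕ} (f : Euc n → ℝ) (A : Euc n ≃ᵃ[ℝ] Euc n)
    (w : Euc n) :
    IsSantaloPoint (fun x => f (A x)) w ↔ IsSantaloPoint f (A w) := by
  have hint :
      interior (Function.support fun x => f (A x)) = A ⁻¹' interior (Function.support f) :=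
    interior_support_comp_homeomorph A.toContinuousAffineEquiv.toHomeomorph f
  have hdet_pos : 0 < |LinearMap.det (A.linear : Euc n →ₗ[ℝ] Euc n)| :=
    abs_pos.2 (LinearEquiv.isUnit_det' A.linear).ne_zero
  simp only [IsSantaloPoint, hint, Set.mem_preimage, integral_polarAt_comp_affineEquiv,
    mul_le_mul_iff_right₀ hdet_pos]
  exact and_congr_right fun _ =>
    (A.surjective.forall (p := fun u => u ∈ interior (Function.support f) →
      ∫ y, polarAt f (A w) y ≤ ∫ y, polarAt f u y)).symm

theorem santalo_affine_contravariant (n : ℕ) (f : Euc n → ℝ)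
    (A : Euc n ≃ᵃ[ℝ] Euc n) (s : Euc n) (hs : IsSantaloPoint f s) :
    IsSantaloPoint (fun x => f (A x)) (A.symm s) :=
  (isSantaloPoint_comp_affineEquiv_iff f A _).2 (by rwa [A.apply_symm_apply])
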